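/- Let N ∈ ℕ and let x_i = cos((2i+1)π/(2N+2)) for i = 0, 1, …, N be the Chebyshev–Gauss points. Then for all 0 ≤ j, k ≤ N: (π/(N+1)) Σ_{i=0}^{N} T_j(x_i) T_k(x_i) = c_k (π/2) δ_{jk}, where c_0 = 2 and c_k = 1 for k ≥ 1 and δ_{jk} is the Kronecker delta. -/

import Mathlib

/-!
Writing `x_i = cos θ_i` with `θ_i = (2i+1)π/(2N+2)`, we have `T_j(x_i) T_k(x_i) = cos(jθ_i) cos(kθ_i)`,
which is half of `cos((j-k)θ_i) + cos((j+k)θ_i)`. For an integer `m` with `0 < |m| ≤ 2N+1` the sum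
`Σ_i cos(mθ_i)` vanishes: multiplied by `sin(mπ/(2N+2)) ≠ 0` it telescopes to
`sin(mπ/2) cos(mπ/2) = sin(mπ)/2 = 0`. Only `m = 0` contributes, with `N+1`, and `j+k = 0` happens
only for `j = k = 0`, which gives the factor `c_0 = 2`.
-/

open Real Polynomial

/-- The k-th Chebyshev polynomial of the first kind, as a real polynomial. -/
noncomputable def chebT (n : ℕ) : Polynomial ℝ := Polynomial.Chebyshev.T ℝ (n : ℤ)

/-- `c_0 = 2`, `c_k = 1` for `k ≥ 1`. -/
noncomputable def cCoef (k : ℕ) : ℝ := if k = 0 then 2 else 1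

open Finset

theorem chebT_eval_cos (n : ℕ) (θ : ℝ) : (chebT n).eval (cos θ) = cos (n * θ) := by
  simp [chebT, Chebyshev.T_real_cos]

theorem chebT_eval_cos_mul_chebT_eval_cos (j k : ℕ) (θ : ℝ) :
    (chebT j).eval (cos θ) * (chebT k).eval (cos θ) =
      (cos (((j - k : ℤ) : ℝ) * θ) + cos (((j + k : ℤ) : ℝ) * θ)) / 2 := by
  rw [chebT_eval_cos, chebT_eval_cos]
  push_cast
  rw [sub_mul, add_mul, cos_sub, cos_add]
  ring

theorem sin_int_mul_pi_div_ne_zero {m : ℤ} {M : ℕ} (hm0 : m ≠ 0) (hm : |m| < M) :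
    sin (m * π / M) ≠ 0 := by
  rw [Ne, sin_eq_zero_iff]
  rintro ⟨n, hn⟩
  have hM : (0 : ℝ) < M := by exact_mod_cast (abs_nonneg m).trans_lt hm
  rw [eq_div_iff hM.ne'] at hn
  have hmn : m = n * M := by
    have h : (m : ℝ) * π = (n * M) * π := by linarith
    exact_mod_cast mul_right_cancel₀ pi_ne_zero h
  have hn0 : n ≠ 0 := by rintro rfl; simp_all
  rw [hmn, abs_mul, Nat.abs_cast] at hm
  nlinarith [Int.one_le_abs hn0]

theorem sum_cos_int_mul_chebyshevGauss_angle (N : ℕ) {m : ℤ} (hm : |m| ≤ 2 * N + 1) :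
    ∑ i ∈ range (N + 1), cos (m * ((2 * (i : ℝ) + 1) * π / (2 * N + 2))) =
      if m = 0 then (N : ℝ) + 1 else 0 := by
  split_ifs with hm0
  · simp [hm0]
  set α := m * π / (2 * N + 2) with hα
  have hsin : sin α ≠ 0 := by
    have h := sin_int_mul_pi_div_ne_zero (M := 2 * N + 2) hm0 (by omega)
    rwa [Nat.cast_add, Nat.cast_mul, Nat.cast_ofNat] at h
  have hhalf : sin (m * π / 2) * cos (m * π / 2) = 0 := by
    have h := sin_two_mul (m * π / 2)
    rw [mul_div_cancel₀ _ two_ne_zero, sin_int_mul_pi] at h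
    linarith
  have hclosed := sin_mul_sum_cos (N + 1) (2 * α) α
  have hsin_arg : ((N + 1 : ℕ) : ℝ) * (2 * α) / 2 = m * π / 2 := by
    rw [hα]; push_cast; field_simp
  have hcos_arg : (((N + 1 : ℕ) : ℝ) - 1) * (2 * α) / 2 + α = m * π / 2 := by
    rw [hα]; push_cast; field_simp; ring
  rw [mul_div_cancel_left₀ α two_ne_zero, hsin_arg, hcos_arg, hhalf] at hclosed
  refine (sum_congr rfl fun i _ => ?_).trans ((mul_eq_zero.mp hclosed).resolve_left hsin)
  congr 1
  rw [hα]; ring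

/-- Discrete orthogonality of the Chebyshev polynomials at the Chebyshev–Gauss
points `x_i = cos((2i+1)π/(2N+2))` with the uniform weights `π/(N+1)`:
for all `0 ≤ j, k ≤ N`,
`(π/(N+1)) Σ_{i=0}^{N} T_j(x_i) T_k(x_i) = c_k (π/2) δ_{jk}`. -/
theorem chebyshev_gauss_discrete_orthogonality (N : ℕ) :
    ∀ j k : ℕ, j ≤ N → k ≤ N →
      (Real.pi / ((N : ℝ) + 1)) *
        ∑ i ∈ Finset.range (N + 1),
          (chebT j).eval (Real.cos ((2 * (i : ℝ) + 1) * Real.pi / (2 * (N : ℝ) + 2))) *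
            (chebT k).eval (Real.cos ((2 * (i : ℝ) + 1) * Real.pi / (2 * (N : ℝ) + 2))) =
      cCoef k * (Real.pi / 2) * (if j = k then 1 else 0) := by
  intro j k hj hk
  simp_rw [chebT_eval_cos_mul_chebT_eval_cos, ← sum_div, sum_add_distrib]
  rw [sum_cos_int_mul_chebyshevGauss_angle N (abs_le.mpr ⟨by omega, by omega⟩),
    sum_cos_int_mul_chebyshevGauss_angle N (abs_le.mpr ⟨by omega, by omega⟩)]
  unfold cCoef
  split_ifs <;> first | omega | (field_simp; ring)
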